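/- Let (R, m) be a two-dimensional regular local ring and Q = (a, b) a parameter ideal with Q ⊆ m^2. Then the socle ideal I = Q : m satisfies μ_R(I) = 3, i.e., I is minimally generated by three elements. -/

import Mathlib

/-!
Write `a = x p + y q` and `b = x r + y s` with `p, q, r, s ∈ m`, and put `Δ = p s - q r`.
In a two-dimensional regular local ring both `x, y` and `a, b` are regular sequences: Krull's
principal ideal theorem forbids `(x)` from being `m`-primary, so `R ⧸ (x)` is a local ring with
principal, non-nilpotent maximal ideal `(y)`, and Krull's intersection theorem makes `y` a
non-zero-divisor there. Solving `z x, z y ∈ (a, b)` with these regularities gives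
`(a, b) : m = (a, b, Δ)`. Because `p, q, r, s ∈ m` we have `m Δ ⊆ m (a, b)`, and `Δ ∉ (a, b)`
since `(a, b)` is `m`-primary; hence a relation `c₁ a + c₂ b + c₃ Δ ∈ m I` forces every `cᵢ ∈ m`.
So `a, b, Δ` stay linearly independent in `I / m I`, and `I` needs three generators.
-/

open IsLocalRing Ideal

/-- Krull's principal ideal theorem, read in a local ring. -/
theorem ringKrullDim_le_one_of_radical_span_singleton_eq {R : Type*} [CommRing R]
    [IsNoetherianRing R] [IsLocalRing R] {z : R} (hz : (span {z}).radical = maximalIdeal R) :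
    ringKrullDim R ≤ 1 := by
  have hmin : maximalIdeal R ∈ (span {z}).minimalPrimes := by
    rw [← radical_minimalPrimes, hz, minimalPrimes_eq_subsingleton_self]
    rfl
  rw [← maximalIdeal_height_eq_ringKrullDim]
  exact_mod_cast height_le_one_of_isPrincipal_of_mem_minimalPrimes _ _ hmin

theorem IsLocalRing.mem_nonZeroDivisors_of_maximalIdeal_eq_span_singleton {S : Type*}
    [CommRing S] [IsNoetherianRing S] [IsLocalRing S] {t : S}
    (h : maximalIdeal S = span {t}) (ht : ¬IsNilpotent t) : t ∈ nonZeroDivisors S := by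
  refine mem_nonZeroDivisors_iff_right.mpr fun c hc => ?_
  -- `t` can be divided out of `c` arbitrarily often, so `c` lies in `⋂ mᵏ = 0`.
  have hdiv : ∀ k : ℕ, ∃ e, c = t ^ k * e ∧ e * t ^ (k + 1) = 0 := by
    intro k
    induction k with
    | zero => exact ⟨c, by simp, by simpa using hc⟩
    | succ k ih =>
      obtain ⟨e, rfl, he⟩ := ih
      have hem : e ∈ maximalIdeal S := fun hu => ht ⟨k + 1, hu.mul_right_eq_zero.mp he⟩
      rw [h] at hem
      obtain ⟨f, rfl⟩ := mem_span_singleton'.mp hem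
      exact ⟨f, by ring, by linear_combination he⟩
  have hmem : c ∈ ⨅ k : ℕ, maximalIdeal S ^ k := by
    refine Submodule.mem_iInf _ |>.mpr fun k => ?_
    obtain ⟨e, rfl, -⟩ := hdiv k
    rw [h, span_singleton_pow]
    exact mem_span_singleton'.mpr ⟨e, mul_comm _ _⟩
  rwa [iInf_pow_eq_bot_of_isLocalRing _ (maximalIdeal.isMaximal S).ne_top] at hmem

open Matrix in
theorem IsLocalRing.card_le_of_span_range_eq {R : Type*} [CommRing R] [IsLocalRing R]
    {n k : ℕ} {v : Fin n → R} {w : Fin k → R}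
    (hv : ∀ c : Fin n → R, ∑ i, c i * v i ∈ maximalIdeal R * span (Set.range v) →
      ∀ i, c i ∈ maximalIdeal R)
    (h : span (Set.range v) = span (Set.range w)) : n ≤ k := by
  choose A hA using fun i => (Submodule.mem_span_range_iff_exists_fun R).mp
    (h ▸ subset_span (Set.mem_range_self i) : v i ∈ span (Set.range w))
  choose E hE using fun j => (Submodule.mem_span_range_iff_exists_fun R).mp
    (h ▸ subset_span (Set.mem_range_self j) : w j ∈ span (Set.range v))
  have hAw : of A *ᵥ w = v := funext fun i => by simpa [mulVec, dotProduct] using hA i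
  have hEv : of E *ᵥ v = w := funext fun j => by simpa [mulVec, dotProduct] using hE j
  -- The transition matrices compose to the identity over the residue field.
  have hAE : (of A * of E).map (residue R) = 1 := by
    ext i l
    have hker : (of A * of E - 1) *ᵥ v = 0 := by
      rw [sub_mulVec, ← mulVec_mulVec, hEv, hAw, one_mulVec, sub_self]
    have hrow : ∑ j, (of A * of E - 1 : Matrix (Fin n) (Fin n) R) i j * v j ∈
        maximalIdeal R * span (Set.range v) := by
      have hi := congrFun hker i
      simp only [mulVec, dotProduct, Pi.zero_apply] at hi
      exact hi ▸ zero_mem _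
    have hil := (residue_eq_zero_iff _).mpr (hv _ hrow l)
    rw [Matrix.sub_apply, map_sub, sub_eq_zero] at hil
    simpa [one_apply, apply_ite (residue R)] using hil
  calc n = (1 : Matrix (Fin n) (Fin n) (ResidueField R)).rank := by simp
    _ = ((of A).map (residue R) * (of E).map (residue R)).rank := by
      rw [← Matrix.map_mul, hAE]
    _ ≤ ((of A).map (residue R)).rank := rank_mul_le_left _ _
    _ ≤ k := rank_le_width _

theorem IsLocalRing.span_triple_ne_span_pair {R : Type*} [CommRing R] [IsLocalRing R]
    {a b c : R} (h : ∀ c₁ c₂ c₃ : R, c₁ * a + c₂ * b + c₃ * c ∈ maximalIdeal R * span {a, b, c} →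
      c₁ ∈ maximalIdeal R ∧ c₂ ∈ maximalIdeal R ∧ c₃ ∈ maximalIdeal R) (d₁ d₂ : R) :
    span {a, b, c} ≠ span {d₁, d₂} := by
  intro hd
  have hrange : Set.range ![a, b, c] = {a, b, c} := by
    rw [Matrix.range_cons, Matrix.range_cons_cons_empty, Set.singleton_union]
  have := card_le_of_span_range_eq (v := ![a, b, c]) (w := ![d₁, d₂]) ?_
    (by rw [hrange, Matrix.range_cons_cons_empty, hd])
  · omega
  · intro γ hγ i
    rw [hrange, Fin.sum_univ_three] at hγ
    obtain ⟨h₀, h₁, h₂⟩ := h _ _ _ hγ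
    fin_cases i <;> assumption

section Generic

variable {R : Type*} [CommRing R]

theorem mem_colon_span_pair_iff {I : Ideal R} {x y z : R} :
    z ∈ I.colon (span {x, y} : Set R) ↔ z * x ∈ I ∧ z * y ∈ I := by
  simp [Submodule.mem_colon, mul_comm]

theorem exists_eq_mul_add_mul_of_mem_sq {J : Ideal R} {x y a : R} (hJ : J = span {x, y})
    (ha : a ∈ J ^ 2) : ∃ p ∈ J, ∃ q ∈ J, a = x * p + y * q := by
  rw [sq] at ha
  nth_rw 1 [hJ] at ha
  rw [span_insert, Ideal.sup_mul] at ha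
  obtain ⟨_, hxp, _, hyq, rfl⟩ := Submodule.mem_sup.mp ha
  obtain ⟨p, hp, rfl⟩ := mem_span_singleton_mul.mp hxp
  obtain ⟨q, hq, rfl⟩ := mem_span_singleton_mul.mp hyq
  exact ⟨p, hp, q, hq, rfl⟩

theorem not_colon_le_self_of_pow_le {Q J : Ideal R} (hQ : Q ≠ ⊤) {N : ℕ} (hN : J ^ N ≤ Q) :
    ¬Q.colon (J : Set R) ≤ Q := by
  intro hle
  induction N with
  | zero => exact hQ (top_le_iff.mp (by simpa using hN))
  | succ N ih =>
    refine ih (le_trans (fun u hu => Submodule.mem_colon.mpr fun v hv => hN ?_) hle)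
    rw [pow_succ]
    exact mul_mem_mul hu hv

theorem mul_span_triple_le_mul_span_pair {J : Ideal R} {x y a b p q r s : R}
    (hJ : J = span {x, y}) (hp : p ∈ J) (hq : q ∈ J) (hr : r ∈ J) (hs : s ∈ J)
    (ha : a = x * p + y * q) (hb : b = x * r + y * s) :
    J * span {a, b, p * s - q * r} ≤ J * span {a, b} := by
  simp only [span_insert]
  rw [← sup_assoc, ← span_insert, Ideal.mul_sup, sup_le_iff]
  refine ⟨le_rfl, ?_⟩
  nth_rw 1 [hJ]
  rw [span_mul_span', span_le]
  rintro _ ⟨u, hu, v, rfl, rfl⟩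
  change u * (p * s - q * r) ∈ J * span {a, b}
  rcases hu with rfl | rfl
  · rw [show u * (p * s - q * r) = s * a - q * b by rw [ha, hb]; ring]
    exact sub_mem (mul_mem_mul hs (subset_span (by simp))) (mul_mem_mul hq (subset_span (by simp)))
  · rw [show u * (p * s - q * r) = p * b - r * a by rw [ha, hb]; ring]
    exact sub_mem (mul_mem_mul hp (subset_span (by simp))) (mul_mem_mul hr (subset_span (by simp)))

theorem mem_of_mul_add_mul_mem_mul_span_pair [IsDomain R] {J : Ideal R} {a b : R}
    (ha : a ∈ J) (hb : b ∈ J) (hb0 : b ≠ 0) (hreg : ∀ u, u * a ∈ span {b} → u ∈ span {b})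
    {c₁ c₂ : R} (h : c₁ * a + c₂ * b ∈ J * span {a, b}) : c₁ ∈ J ∧ c₂ ∈ J := by
  rw [span_insert, Ideal.mul_sup, mul_comm, mul_comm J] at h
  obtain ⟨_, hae, _, hbe, hsum⟩ := Submodule.mem_sup.mp h
  obtain ⟨e₁, he₁, rfl⟩ := mem_span_singleton_mul.mp hae
  obtain ⟨e₂, he₂, rfl⟩ := mem_span_singleton_mul.mp hbe
  obtain ⟨u, hu⟩ := mem_span_singleton'.mp <| hreg (c₁ - e₁) <|
    mem_span_singleton'.mpr ⟨e₂ - c₂, by linear_combination hsum⟩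
  have hc₂ : e₂ - c₂ = u * a := mul_left_cancel₀ hb0 (by linear_combination hsum - a * hu)
  constructor
  · rw [show c₁ = e₁ + u * b by linear_combination -hu]
    exact add_mem he₁ (mul_mem_left J u hb)
  · rw [show c₂ = e₂ - u * a by linear_combination -hc₂]
    exact sub_mem he₂ (mul_mem_left J u ha)

theorem radical_span_singleton_eq_of_pow_mem [IsLocalRing R] {x y : R}
    (hm : maximalIdeal R = span {x, y}) {n : ℕ} (hy : y ^ n ∈ span {x}) :
    (span {x}).radical = maximalIdeal R := by
  refine le_antisymm ?_ ?_
  · rw [← (maximalIdeal.isMaximal R).isPrime.radical]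
    refine radical_mono ?_
    rw [span_singleton_le_iff_mem, hm]
    exact subset_span (by simp)
  · rw [hm, span_le]
    rintro _ (rfl | rfl)
    · exact le_radical (mem_span_singleton_self _)
    · exact ⟨n, hy⟩

end Generic

section TwoDimensional

variable {R : Type*} [CommRing R] [IsNoetherianRing R] [IsLocalRing R] {x y : R}

theorem ne_zero_of_maximalIdeal_eq_span_pair (hm : maximalIdeal R = span {x, y})
    (hdim : 1 < ringKrullDim R) : x ≠ 0 := by
  rintro rfl
  have hy : span {y} = maximalIdeal R := by rw [hm, span_insert_zero]
  refine hdim.not_ge (ringKrullDim_le_one_of_radical_span_singleton_eq (z := y) ?_)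
  rw [hy, (maximalIdeal.isMaximal R).isPrime.radical]

theorem mem_span_singleton_of_mul_mem (hm : maximalIdeal R = span {x, y})
    (hdim : 1 < ringKrullDim R) {c : R} (hc : c * y ∈ span {x}) : c ∈ span {x} := by
  have hx : x ∈ maximalIdeal R := hm ▸ subset_span (by simp)
  have : Nontrivial (R ⧸ span {x}) := Ideal.Quotient.nontrivial_iff.mpr fun h =>
    (maximalIdeal.isMaximal R).ne_top (top_le_iff.mp (h ▸ (span_singleton_le_iff_mem _).mpr hx))
  have : IsLocalRing (R ⧸ span {x}) :=
    .of_surjective' (Ideal.Quotient.mk _) Ideal.Quotient.mk_surjective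
  have hmS : maximalIdeal (R ⧸ span {x}) = span {Ideal.Quotient.mk _ y} := by
    rw [← map_maximalIdeal_of_surjective (Ideal.Quotient.mk _) Ideal.Quotient.mk_surjective, hm,
      map_span, Set.image_pair, Ideal.Quotient.eq_zero_iff_mem.mpr (mem_span_singleton_self x),
      span_insert_zero]
  have hy : ¬IsNilpotent (Ideal.Quotient.mk (span {x}) y) := by
    rintro ⟨n, hn⟩
    rw [← map_pow, Ideal.Quotient.eq_zero_iff_mem] at hn
    exact hdim.not_ge (ringKrullDim_le_one_of_radical_span_singleton_eq
      (radical_span_singleton_eq_of_pow_mem hm hn))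
  have hreg := mem_nonZeroDivisors_of_maximalIdeal_eq_span_singleton hmS hy
  have hc' : Ideal.Quotient.mk (span {x}) c * Ideal.Quotient.mk (span {x}) y = 0 := by
    rw [← map_mul]
    exact Ideal.Quotient.eq_zero_iff_mem.mpr hc
  exact Ideal.Quotient.eq_zero_iff_mem.mp (mem_nonZeroDivisors_iff_right.mp hreg _ hc')

variable [IsDomain R]

theorem mem_span_singleton_of_mul_mem_of_mul_mem (hm : maximalIdeal R = span {x, y})
    (hdim : 1 < ringKrullDim R) {e w : R} (he : e ≠ 0) (hwx : w * x ∈ span {e})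
    (hwy : w * y ∈ span {e}) : w ∈ span {e} := by
  obtain ⟨c, hc⟩ := mem_span_singleton'.mp hwx
  obtain ⟨d, hd⟩ := mem_span_singleton'.mp hwy
  have hcd : c * y = d * x := mul_left_cancel₀ he (by linear_combination y * hc - x * hd)
  obtain ⟨f, hf⟩ := mem_span_singleton'.mp
    (mem_span_singleton_of_mul_mem hm hdim (hcd ▸ mul_mem_left _ d (mem_span_singleton_self x)))
  have hw : w = f * e := mul_right_cancel₀ (ne_zero_of_maximalIdeal_eq_span_pair hm hdim)
    (by linear_combination - hc - e * hf)
  exact hw ▸ mem_span_singleton'.mpr ⟨f, rfl⟩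

theorem mem_span_singleton_of_forall_mul_mem (hm : maximalIdeal R = span {x, y})
    (hdim : 1 < ringKrullDim R) {e : R} (he : e ≠ 0) (k : ℕ) {w : R}
    (h : ∀ v ∈ maximalIdeal R ^ k, w * v ∈ span {e}) : w ∈ span {e} := by
  induction k generalizing w with
  | zero => simpa using h 1 (by simp)
  | succ k ih =>
    refine ih fun v hv => mem_span_singleton_of_mul_mem_of_mul_mem hm hdim he ?_ ?_ <;>
    · rw [mul_assoc]
      refine h _ (pow_succ (maximalIdeal R) k ▸ mul_mem_mul hv ?_)
      exact hm ▸ subset_span (by simp)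

theorem mem_span_singleton_of_mul_mem_of_pow_le (hm : maximalIdeal R = span {x, y})
    (hdim : 1 < ringKrullDim R) {a b : R} {N : ℕ} (hN : maximalIdeal R ^ N ≤ span {a, b})
    (hb : b ≠ 0) {u : R} (hu : u * a ∈ span {b}) : u ∈ span {b} := by
  refine mem_span_singleton_of_forall_mul_mem hm hdim hb N fun v hv => ?_
  obtain ⟨s, t, rfl⟩ := mem_span_pair.mp (hN hv)
  rw [show u * (s * a + t * b) = s * (u * a) + (t * u) * b by ring]
  exact add_mem (mul_mem_left _ s hu) (mul_mem_left _ _ (mem_span_singleton_self b))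

theorem colon_maximalIdeal_eq_span_triple (hm : maximalIdeal R = span {x, y})
    (hdim : 1 < ringKrullDim R) {a b p q r s : R} {N : ℕ}
    (hN : maximalIdeal R ^ N ≤ span {a, b}) (hb0 : b ≠ 0)
    (ha : a = x * p + y * q) (hb : b = x * r + y * s) :
    (span {a, b}).colon (maximalIdeal R : Set R) = span {a, b, p * s - q * r} := by
  have hΔx : (p * s - q * r) * x = s * a - q * b := by rw [ha, hb]; ring
  have hΔy : (p * s - q * r) * y = p * b - r * a := by rw [ha, hb]; ring
  apply le_antisymm
  · intro z hz
    rw [hm, mem_colon_span_pair_iff] at hz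
    obtain ⟨α, β, h₁⟩ := mem_span_pair.mp hz.1
    obtain ⟨γ, δ, h₂⟩ := mem_span_pair.mp hz.2
    obtain ⟨t, ht⟩ := mem_span_singleton'.mp <| mem_span_singleton_of_mul_mem_of_pow_le hm hdim
      hN hb0 (u := α * y - γ * x) <| mem_span_singleton'.mpr
        ⟨δ * x - β * y, by linear_combination x * h₂ - y * h₁⟩
    have hta : δ * x - β * y = t * a := mul_left_cancel₀ hb0 <| by
      linear_combination x * h₂ - y * h₁ - a * ht
    obtain ⟨μ, hμ⟩ := mem_span_singleton'.mp <| mem_span_singleton_of_mul_mem hm hdim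
      (c := β + t * q) <| mem_span_singleton'.mpr ⟨δ - t * p, by linear_combination hta + t * ha⟩
    obtain ⟨ν, hν⟩ := mem_span_singleton'.mp <| mem_span_singleton_of_mul_mem hm hdim
      (c := α - t * s) <| mem_span_singleton'.mpr ⟨γ + t * r, by linear_combination ht - t * hb⟩
    have hz : z = ν * a + μ * b + t * (p * s - q * r) :=
      mul_right_cancel₀ (ne_zero_of_maximalIdeal_eq_span_pair hm hdim) <| by
        linear_combination -h₁ - a * hν - b * hμ - t * hΔx
    rw [hz]
    exact add_mem (add_mem (mul_mem_left _ _ (subset_span (by simp)))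
      (mul_mem_left _ _ (subset_span (by simp)))) (mul_mem_left _ _ (subset_span (by simp)))
  · rw [span_le]
    rintro _ (rfl | rfl | rfl) <;> rw [SetLike.mem_coe, hm, mem_colon_span_pair_iff]
    · exact ⟨mul_mem_right _ _ (subset_span (by simp)), mul_mem_right _ _ (subset_span (by simp))⟩
    · exact ⟨mul_mem_right _ _ (subset_span (by simp)), mul_mem_right _ _ (subset_span (by simp))⟩
    · rw [hΔx, hΔy]
      exact ⟨mem_span_pair.mpr ⟨s, -q, by ring⟩, mem_span_pair.mpr ⟨-r, p, by ring⟩⟩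

theorem mem_maximalIdeal_of_mul_add_mul_add_mul_mem (hm : maximalIdeal R = span {x, y})
    (hdim : 1 < ringKrullDim R) {a b p q r s : R} {N : ℕ}
    (hN : maximalIdeal R ^ N ≤ span {a, b}) (hb0 : b ≠ 0)
    (hp : p ∈ maximalIdeal R) (hq : q ∈ maximalIdeal R) (hr : r ∈ maximalIdeal R)
    (hs : s ∈ maximalIdeal R) (ha : a = x * p + y * q) (hb : b = x * r + y * s)
    (hΔ : p * s - q * r ∉ span {a, b}) {c₁ c₂ c₃ : R}
    (h : c₁ * a + c₂ * b + c₃ * (p * s - q * r) ∈ maximalIdeal R * span {a, b, p * s - q * r}) :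
    c₁ ∈ maximalIdeal R ∧ c₂ ∈ maximalIdeal R ∧ c₃ ∈ maximalIdeal R := by
  have hle := mul_span_triple_le_mul_span_pair hm hp hq hr hs ha hb
  have hc₃ : c₃ ∈ maximalIdeal R := by
    by_contra hc₃
    refine hΔ ((unit_mul_mem_iff_mem _ (notMem_maximalIdeal.mp hc₃)).mp ?_)
    have hab : c₁ * a + c₂ * b ∈ span {a, b} :=
      add_mem (mul_mem_left _ c₁ (subset_span (by simp)))
        (mul_mem_left _ c₂ (subset_span (by simp)))
    simpa using sub_mem (mul_le_right (hle h)) hab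
  have hΔm : c₃ * (p * s - q * r) ∈ maximalIdeal R * span {a, b} :=
    hle (mul_mem_mul hc₃ (subset_span (by simp)))
  have hab : c₁ * a + c₂ * b ∈ maximalIdeal R * span {a, b} := by
    simpa using sub_mem (hle h) hΔm
  have ham : a ∈ maximalIdeal R := ha ▸ add_mem (mul_mem_left _ _ hp) (mul_mem_left _ _ hq)
  have hbm : b ∈ maximalIdeal R := hb ▸ add_mem (mul_mem_left _ _ hr) (mul_mem_left _ _ hs)
  obtain ⟨hc₁, hc₂⟩ := mem_of_mul_add_mul_mem_mul_span_pair ham hbm hb0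
    (fun _ => mem_span_singleton_of_mul_mem_of_pow_le hm hdim hN hb0) hab
  exact ⟨hc₁, hc₂, hc₃⟩

end TwoDimensional

theorem stmt_17 (R : Type*) [CommRing R] [IsDomain R] [IsNoetherianRing R] [IsLocalRing R]
    (hdim : ringKrullDim R = 2) (x y : R)
    (hm : maximalIdeal R = Ideal.span {x, y})
    (a b : R)
    (hQm2 : (Ideal.span {a, b} : Ideal R) ≤ maximalIdeal R ^ 2)
    (hQ : (Ideal.span {a, b} : Ideal R).radical = maximalIdeal R)
    (I : Ideal R) (hI : I = Submodule.colon (Ideal.span {a, b} : Ideal R) (maximalIdeal R)) :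
    (∃ c₁ c₂ c₃ : R, I = Ideal.span {c₁, c₂, c₃}) ∧
      ¬∃ d₁ d₂ : R, I = Ideal.span {d₁, d₂} := by
  have hdim' : 1 < ringKrullDim R := by rw [hdim]; exact_mod_cast one_lt_two
  obtain ⟨N, hN⟩ := hQ ▸ exists_radical_pow_le_of_fg _ (IsNoetherian.noetherian _)
  have hb0 : b ≠ 0 := by
    rintro rfl
    refine hdim'.not_ge (ringKrullDim_le_one_of_radical_span_singleton_eq (z := a) ?_)
    rwa [← span_insert_zero, Set.pair_comm]
  have haQ : a ∈ span {a, b} := subset_span (by simp)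
  have hbQ : b ∈ span {a, b} := subset_span (by simp)
  obtain ⟨p, hp, q, hq, ha⟩ := exists_eq_mul_add_mul_of_mem_sq hm (hQm2 haQ)
  obtain ⟨r, hr, s, hs, hb⟩ := exists_eq_mul_add_mul_of_mem_sq hm (hQm2 hbQ)
  have hIeq : I = span {a, b, p * s - q * r} :=
    hI.trans (colon_maximalIdeal_eq_span_triple hm hdim' hN hb0 ha hb)
  have hΔ : p * s - q * r ∉ span {a, b} := fun hΔQ => by
    refine not_colon_le_self_of_pow_le ?_ hN ?_
    · exact ne_top_of_le_ne_top (maximalIdeal.isMaximal R).ne_top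
        (hQm2.trans (pow_le_self two_ne_zero))
    · rw [← hI, hIeq, span_le]
      simp [Set.insert_subset_iff, haQ, hbQ, hΔQ]
  refine ⟨⟨a, b, p * s - q * r, hIeq⟩, fun ⟨d₁, d₂, hd⟩ => ?_⟩
  refine span_triple_ne_span_pair (fun _ _ _ => ?_) d₁ d₂ (hIeq ▸ hd)
  exact mem_maximalIdeal_of_mul_add_mul_add_mul_mem hm hdim' hN hb0 hp hq hr hs ha hb hΔ
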